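/- There exists a 5-point set K of 2×2 upper triangular real matrices such that the lamination convex hull L(K) is not compact (it is not closed). -/

import Mathlib

/-!
The four diagonal matrices `diag(1,3), diag(3,-1), diag(-1,-3), diag(-3,1)` form a `T₄`
configuration: no two of them are rank-one connected, yet starting from
`P c = !![1, c; 0, -1]` and taking rank-one midpoints with the four corners in turn one returns
to `P (c / 16)`. Hence adding `P 1` to the corners gives a hull containing `P (16⁻¹ ^ n)` for
all `n`, which accumulate at `diag(1,-1)`. That limit is not in the hull, because the corners
together with the open half-space `{M | 0 < M 0 1}` form a lamination convex set containing `K`.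
-/

abbrev M2 := Matrix (Fin 2) (Fin 2) ℝ

/-- `S ⊆ ℝ^{2×2}` is lamination convex. -/
def LamConvex (S : Set M2) : Prop :=
  ∀ X ∈ S, ∀ Y ∈ S, (X - Y).rank = 1 → segment ℝ X Y ⊆ S

/-- The lamination convex hull of `K`. -/
def lamHull (K : Set M2) : Set M2 :=
  ⋂₀ {S | K ⊆ S ∧ LamConvex S}

namespace Matrix

variable {m n K : Type*} [Fintype n] [DecidableEq n] [Field K]

theorem rank_lt_card_of_det_eq_zero {M : Matrix n n K} (h : M.det = 0) :
    M.rank < Fintype.card n := by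
  obtain ⟨v, hv, hMv⟩ := exists_mulVec_eq_zero_iff.mpr h
  have hker : 0 < Module.finrank K (LinearMap.ker M.mulVecLin) :=
    Module.finrank_pos_iff_exists_ne_zero.mpr ⟨⟨v, hMv⟩, by simpa [Subtype.ext_iff] using hv⟩
  have := LinearMap.finrank_range_add_finrank_ker M.mulVecLin
  rw [Module.finrank_fintype_fun_eq_card] at this
  rw [rank]
  omega

theorem rank_pos_of_ne_zero {M : Matrix m n K} (h : M ≠ 0) : 0 < M.rank := by
  rw [Nat.pos_iff_ne_zero, rank, Ne, Submodule.finrank_eq_zero, LinearMap.range_eq_bot,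
    ← mulVecLin_zero]
  exact fun h0 => h (toLin'.injective h0)

theorem rank_eq_one_of_det_eq_zero {M : Matrix (Fin 2) (Fin 2) K} (h0 : M ≠ 0)
    (hdet : M.det = 0) : M.rank = 1 := by
  have := rank_lt_card_of_det_eq_zero hdet
  have := rank_pos_of_ne_zero h0
  simp only [Fintype.card_fin] at *
  omega

end Matrix

theorem subset_lamHull (K : Set M2) : K ⊆ lamHull K :=
  fun _ hx _ hS => hS.1 hx

theorem lamHull_subset {K S : Set M2} (hKS : K ⊆ S) (hS : LamConvex S) : lamHull K ⊆ S :=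
  fun _ hx => hx S ⟨hKS, hS⟩

theorem lamConvex_lamHull (K : Set M2) : LamConvex (lamHull K) :=
  fun X hX Y hY hr _ hZ S hS => hS.2 X (hX S hS) Y (hY S hS) hr hZ

/-- Two distinct upper triangular matrices are rank-one connected iff they share a diagonal
entry. -/
theorem LamConvex.upperTriangular_midpoint_mem {S : Set M2} (hS : LamConvex S)
    {a b d a' b' d' : ℝ} (hX : !![a, b; 0, d] ∈ S) (hY : !![a', b'; 0, d'] ∈ S)
    (hdiag : a = a' ∨ d = d') (hne : a ≠ a' ∨ b ≠ b' ∨ d ≠ d') :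
    !![(a + a') / 2, (b + b') / 2; 0, (d + d') / 2] ∈ S := by
  have hsub : !![a, b; 0, d] - !![a', b'; 0, d'] = !![a - a', b - b'; 0, d - d'] := by
    ext i j; fin_cases i <;> fin_cases j <;> simp
  have hrank : (!![a, b; 0, d] - !![a', b'; 0, d']).rank = 1 := by
    refine Matrix.rank_eq_one_of_det_eq_zero ?_ ?_ <;> rw [hsub]
    · intro h0
      have h00 := congrFun (congrFun h0 0) 0
      have h01 := congrFun (congrFun h0 0) 1
      have h11 := congrFun (congrFun h0 1) 1
      simp only [Matrix.of_apply, Matrix.cons_val', Matrix.cons_val_zero, Matrix.cons_val_one,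
        Matrix.empty_val', Matrix.cons_val_fin_one, Matrix.zero_apply] at h00 h01 h11
      rcases hne with h | h | h <;> exact h (by linarith)
    · rw [Matrix.det_fin_two_of]
      rcases hdiag with h | h <;> simp [h]
  convert hS _ hX _ hY hrank (midpoint_mem_segment _ _) using 1
  ext i j; fin_cases i <;> fin_cases j <;> simp [midpoint_eq_smul_add] <;> ring

theorem lamConvex_setOf_pos_union {C : Set M2} (hC : ∀ A ∈ C, 0 ≤ A 0 1)
    (hrank : ∀ A ∈ C, ∀ B ∈ C, (A - B).rank ≠ 1) : LamConvex ({M | 0 < M 0 1} ∪ C) := by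
  have hnonneg : ∀ M ∈ {M : M2 | 0 < M 0 1} ∪ C, 0 ≤ M 0 1 := fun M hM =>
    hM.elim (fun h => h.le) (hC M)
  intro X hX Y hY hr Z hZ
  rw [← insert_endpoints_openSegment] at hZ
  rcases hZ with rfl | rfl | ⟨a, b, ha, hb, -, rfl⟩
  · exact hX
  · exact hY
  have hpos : 0 < X 0 1 ∨ 0 < Y 0 1 := by
    by_contra! h
    exact hrank X (hX.resolve_left (by simpa using h.1)) Y
      (hY.resolve_left (by simpa using h.2)) hr
  left
  show 0 < a * X 0 1 + b * Y 0 1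
  rcases hpos with h | h
  · exact add_pos_of_pos_of_nonneg (mul_pos ha h) (mul_nonneg hb.le (hnonneg Y hY))
  · exact add_pos_of_nonneg_of_pos (mul_nonneg ha.le (hnonneg X hX)) (mul_pos hb h)

namespace T4Example

def corners : Set M2 := {!![1, 0; 0, 3], !![3, 0; 0, -1], !![-1, 0; 0, -3], !![-3, 0; 0, 1]}

def P (c : ℝ) : M2 := !![1, c; 0, -1]

def K : Set M2 := insert (P 1) corners

theorem corners_subset_lamHull : corners ⊆ lamHull K :=
  (Set.subset_insert _ _).trans (subset_lamHull K)

theorem P_div_sixteen_mem_lamHull {c : ℝ} (h : P c ∈ lamHull K) : P (c / 16) ∈ lamHull K := by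
  have hL := lamConvex_lamHull K
  have hA₁ : !![1, 0; 0, 3] ∈ lamHull K := corners_subset_lamHull (by simp [corners])
  have hA₂ : !![3, 0; 0, -1] ∈ lamHull K := corners_subset_lamHull (by simp [corners])
  have hA₃ : !![-1, 0; 0, -3] ∈ lamHull K := corners_subset_lamHull (by simp [corners])
  have hA₄ : !![-3, 0; 0, 1] ∈ lamHull K := corners_subset_lamHull (by simp [corners])
  have h₁ := hL.upperTriangular_midpoint_mem h hA₁ (by norm_num) (by norm_num)
  norm_num at h₁
  have h₂ := hL.upperTriangular_midpoint_mem h₁ hA₄ (by norm_num) (by norm_num)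
  norm_num at h₂
  have h₃ := hL.upperTriangular_midpoint_mem h₂ hA₃ (by norm_num) (by norm_num)
  norm_num at h₃
  have h₄ := hL.upperTriangular_midpoint_mem h₃ hA₂ (by norm_num) (by norm_num)
  norm_num at h₄
  rwa [P, show c / 16 = c / 2 / 2 / 2 / 2 by ring]

theorem P_inv_sixteen_pow_mem_lamHull (n : ℕ) : P ((16 : ℝ)⁻¹ ^ n) ∈ lamHull K := by
  induction n with
  | zero => simpa using subset_lamHull K (Set.mem_insert _ _)
  | succ n ih => simpa [pow_succ, div_eq_mul_inv] using P_div_sixteen_mem_lamHull ih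

theorem lamHull_subset_setOf_pos_union : lamHull K ⊆ {M | 0 < M 0 1} ∪ corners := by
  refine lamHull_subset (Set.insert_subset (Or.inl (by simp [P])) Set.subset_union_right) ?_
  refine lamConvex_setOf_pos_union (by simp [corners]) ?_
  simp only [corners, Set.mem_insert_iff, Set.mem_singleton_iff]
  rintro A hA B hB
  rcases hA with rfl | rfl | rfl | rfl <;> rcases hB with rfl | rfl | rfl | rfl <;>
    first
    | (rw [sub_self, Matrix.rank_zero]; norm_num)
    | (rw [Matrix.rank_of_det_ne_zero (by norm_num [Matrix.det_fin_two])]; norm_num)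

theorem P_zero_not_mem_lamHull : P 0 ∉ lamHull K := by
  intro h
  have := lamHull_subset_setOf_pos_union h
  norm_num [P, corners] at this

theorem not_isClosed_lamHull : ¬ IsClosed (lamHull K) := by
  intro hcl
  have hlim : Filter.Tendsto (fun n : ℕ => P ((16 : ℝ)⁻¹ ^ n)) Filter.atTop (nhds (P 0)) :=
    ((show Continuous P by unfold P; fun_prop).tendsto 0).comp
      (tendsto_pow_atTop_nhds_zero_of_lt_one (by norm_num) (by norm_num))
  exact P_zero_not_mem_lamHull
    (hcl.mem_of_tendsto hlim (Filter.Eventually.of_forall P_inv_sixteen_pow_mem_lamHull))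

theorem ncard_K : K.ncard = 5 := by
  simp only [K, P, corners]
  repeat rw [Set.ncard_insert_of_notMem (by norm_num)]
  rw [Set.ncard_singleton]

theorem K_upperTriangular : ∀ A ∈ K, A 1 0 = 0 := by
  simp [K, P, corners]

end T4Example

/-- There is a 5-point set `K` of upper triangular 2×2 matrices whose lamination
convex hull is not compact (in particular, not closed). -/
theorem stmt18 :
    ∃ K : Set M2, K.ncard = 5 ∧ (∀ A ∈ K, A 1 0 = 0) ∧
      ¬ IsCompact (lamHull K) ∧ ¬ IsClosed (lamHull K) :=
  ⟨T4Example.K, T4Example.ncard_K, T4Example.K_upperTriangular,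
    fun h => T4Example.not_isClosed_lamHull h.isClosed, T4Example.not_isClosed_lamHull⟩
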